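/- arXiv:cs/0502001 — 4 statements merged into one kernel-verified Lean document; each statement's English description precedes it below -/
import Mathlib

section
/- Let X be a general source over finite alphabet 𝒳, W a general channel with finite output alphabet 𝒴, and Y the output of W with input X. Suppose 0 < δ < I_inf(X;Y) and that ε_n(δ) > 0 for every n ≥ 1, where ε_n(δ) = Pr[(1/n)·ln(W^n(Y^n|X^n)/P_{Y^n}(Y^n)) < I_inf(X;Y) − δ]. Define ρ_n = min{ (−(1/2)·ln ε_n(δ)) / (n·(I_inf(X;Y) − δ)), 1 }. Then for every n ≥ 1, E_0^{(n)}(ρ_n, X) ≥ ρ_n·(I_inf(X;Y) − δ) − (3·ln 2)/n. -/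
open Real Filter
open scoped Classical

/-- `Pr[(1/n)·ln(Wⁿ(Yⁿ|Xⁿ)/P_{Yⁿ}(Yⁿ)) < β]` for the joint distribution
`P_{XⁿYⁿ}(xⁿ,yⁿ) = P_{Xⁿ}(xⁿ)·Wⁿ(yⁿ|xⁿ)`. -/
noncomputable def prInfDensityLT {𝒳 𝒴 : Type*} [Fintype 𝒳] [Fintype 𝒴]
    (P : (n : ℕ) → (Fin n → 𝒳) → ℝ)
    (W : (n : ℕ) → (Fin n → 𝒳) → (Fin n → 𝒴) → ℝ)
    (β : ℝ) (n : ℕ) : ℝ :=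
  ∑ x : Fin n → 𝒳, ∑ y : Fin n → 𝒴,
    if (1 / (n : ℝ)) * Real.log (W n x y / ∑ x' : Fin n → 𝒳, P n x' * W n x' y) < β
    then P n x * W n x y else 0

/-- The spectral inf-mutual information rate `I_inf(X;Y)`. -/
noncomputable def specInfMutualInfo {𝒳 𝒴 : Type*} [Fintype 𝒳] [Fintype 𝒴]
    (P : (n : ℕ) → (Fin n → 𝒳) → ℝ)
    (W : (n : ℕ) → (Fin n → 𝒳) → (Fin n → 𝒴) → ℝ) : ℝ :=
  sSup {β : ℝ | Tendsto (fun n => prInfDensityLT P W β n) atTop (nhds 0)}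

/-- Gallager's function `E₀⁽ⁿ⁾(ρ, X)`. -/
noncomputable def gallagerE0 {𝒳 𝒴 : Type*} [Fintype 𝒳] [Fintype 𝒴] (n : ℕ)
    (Pn : (Fin n → 𝒳) → ℝ) (Wn : (Fin n → 𝒳) → (Fin n → 𝒴) → ℝ) (ρ : ℝ) : ℝ :=
  -(1 / (n : ℝ)) * Real.log
    (∑ y : Fin n → 𝒴, (∑ x : Fin n → 𝒳, Pn x * Wn x y ^ (1 / (1 + ρ))) ^ (1 + ρ))

/-!
Write `τ = exp (n R)` with `R = I_inf(X;Y) - δ`, and `Q(y) = Σₓ P(x) W(y|x)` for the output law.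
For each output `y` split the inner sum `Σₓ P(x) W(y|x)^{1/(1+ρ)}` according to whether the
density ratio `W(y|x) / Q(y)` is below `τ`. Raised to the power `1 + ρ`, the low part is at most
its probability mass by Jensen; on the high part `W ≥ τ Q`, so
`W^{1/(1+ρ)} ≤ (τ Q)^{-ρ/(1+ρ)} W`, and that part contributes at most `τ^{-ρ} Q(y)`.
With `(a + b)^{1+ρ} ≤ 2^ρ (a^{1+ρ} + b^{1+ρ})` the Gallager sum is at most `2^ρ (ε + τ^{-ρ})`,
and the choice of `ρ_n` makes `ε ≤ τ^{-ρ}`, whence the sum is at most `4 exp (-n ρ R)`.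
-/

open Finset

theorem Real.rpow_add_le_mul_rpow_add_rpow {a b p : ℝ} (ha : 0 ≤ a) (hb : 0 ≤ b) (hp : 1 ≤ p) :
    (a + b) ^ p ≤ 2 ^ (p - 1) * (a ^ p + b ^ p) := by
  exact_mod_cast NNReal.rpow_add_le_mul_rpow_add_rpow ⟨a, ha⟩ ⟨b, hb⟩ hp

theorem Real.one_div_mul_log_lt_iff {a b t : ℝ} (ha : 0 < a) (hb : 0 < b) (ht : 0 ≤ t) :
    1 / a * log t < b ↔ t < exp (a * b) := by
  rcases ht.eq_or_lt with rfl | ht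
  · -- `log 0 = 0`, so both sides hold at `t = 0`.
    simp [exp_pos, hb]
  · rw [one_div_mul_eq_div, div_lt_iff₀ ha, ← log_lt_iff_lt_exp ht, mul_comm]

theorem Real.le_exp_rpow_neg_of_le_neg_half_log_div {ε a ρ : ℝ} (hε0 : 0 ≤ ε) (hε1 : ε ≤ 1)
    (ha : 0 < a) (hρ : ρ ≤ -(1 / 2) * log ε / a) : ε ≤ exp a ^ (-ρ) := by
  rcases hε0.eq_or_lt with rfl | hε0
  · positivity
  have haρ : a * ρ ≤ -(1 / 2) * log ε := (le_div_iff₀' ha).1 hρ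
  have hlog : log ε ≤ 0 := log_nonpos hε0.le hε1
  calc ε = exp (log ε) := (exp_log hε0).symm
    _ ≤ exp a ^ (-ρ) := by rw [← exp_mul]; exact exp_le_exp.2 (by linarith)

theorem Real.rpow_le_rpow_sub_one_mul {c w q : ℝ} (hc : 0 < c) (hcw : c ≤ w) (hq : q ≤ 1) :
    w ^ q ≤ c ^ (q - 1) * w := by
  have hw : 0 < w := hc.trans_le hcw
  calc w ^ q = w ^ (q - 1) * w := by rw [rpow_sub_one hw.ne', div_mul_cancel₀ _ hw.ne']
    _ ≤ c ^ (q - 1) * w :=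
        mul_le_mul_of_nonneg_right (rpow_le_rpow_of_nonpos hc hcw (by linarith)) hw.le

theorem Real.rpow_sum_mul_rpow_inv_le {ι : Type*} (s : Finset ι) {w f : ι → ℝ}
    (hw : ∀ i ∈ s, 0 ≤ w i) (hw1 : ∑ i ∈ s, w i = 1) (hf : ∀ i ∈ s, 0 ≤ f i) {r : ℝ}
    (hr : 1 ≤ r) : (∑ i ∈ s, w i * f i ^ (1 / r)) ^ r ≤ ∑ i ∈ s, w i * f i := by
  calc (∑ i ∈ s, w i * f i ^ (1 / r)) ^ r ≤ ∑ i ∈ s, w i * (f i ^ (1 / r)) ^ r :=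
        rpow_arith_mean_le_arith_mean_rpow s w _ hw hw1 (fun i hi => rpow_nonneg (hf i hi) _) hr
    _ = ∑ i ∈ s, w i * f i := by
        refine sum_congr rfl fun i hi => ?_
        rw [← rpow_mul (hf i hi), one_div_mul_cancel (by linarith), rpow_one]

theorem Real.rpow_mul_rpow_sub_one_mul {τ Q ρ : ℝ} (hτ : 0 < τ) (hQ : 0 ≤ Q) (hρ : 0 ≤ ρ) :
    ((τ * Q) ^ (1 / (1 + ρ) - 1) * Q) ^ (1 + ρ) = τ ^ (-ρ) * Q := by
  rcases hQ.eq_or_lt with rfl | hQ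
  · simp [zero_rpow (by linarith : 1 + ρ ≠ 0)]
  · have hexp : (1 / (1 + ρ) - 1) * (1 + ρ) = -ρ := by field_simp; ring
    rw [mul_rpow (by positivity) hQ.le, ← rpow_mul (by positivity), hexp, mul_rpow hτ.le hQ.le,
      mul_assoc, ← rpow_add hQ, show -ρ + (1 + ρ) = 1 by ring, rpow_one]

section Gallager

variable {α β : Type*} [Fintype α]

noncomputable def gallagerSum [Fintype β] (P : α → ℝ) (W : α → β → ℝ) (ρ : ℝ) : ℝ :=
  ∑ y, (∑ x, P x * W x y ^ (1 / (1 + ρ))) ^ (1 + ρ)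

/-- `Pr[W(Y|X) / Q(Y) < τ]` under the joint law `P(x) W(y|x)`, with `Q` the output law. -/
noncomputable def lowDensityProb [Fintype β] (P : α → ℝ) (W : α → β → ℝ) (τ : ℝ) : ℝ :=
  ∑ x, ∑ y, if W x y / ∑ x', P x' * W x' y < τ then P x * W x y else 0

variable {P : α → ℝ} {W : α → β → ℝ}

theorem sum_sum_mul_eq_one [Fintype β] (hP1 : ∑ x, P x = 1) (hW1 : ∀ x, ∑ y, W x y = 1) :
    ∑ y, ∑ x, P x * W x y = 1 := by
  rw [sum_comm]
  simp_rw [← mul_sum, hW1, mul_one, hP1]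

theorem lowDensityProb_nonneg [Fintype β] (hP : ∀ x, 0 ≤ P x) (hW : ∀ x y, 0 ≤ W x y) (τ : ℝ) :
    0 ≤ lowDensityProb P W τ :=
  sum_nonneg fun x _ => sum_nonneg fun y _ => by
    split_ifs
    exacts [mul_nonneg (hP x) (hW x y), le_rfl]

theorem lowDensityProb_le_one [Fintype β] (hP : ∀ x, 0 ≤ P x) (hP1 : ∑ x, P x = 1)
    (hW : ∀ x y, 0 ≤ W x y) (hW1 : ∀ x, ∑ y, W x y = 1) (τ : ℝ) : lowDensityProb P W τ ≤ 1 := by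
  calc lowDensityProb P W τ ≤ ∑ x, ∑ y, P x * W x y :=
        sum_le_sum fun x _ => sum_le_sum fun y _ => by
          split_ifs
          exacts [le_rfl, mul_nonneg (hP x) (hW x y)]
    _ = 1 := by rw [sum_comm, sum_sum_mul_eq_one hP1 hW1]

theorem gallagerSum_pos [Fintype β] (hP : ∀ x, 0 ≤ P x) (hP1 : ∑ x, P x = 1)
    (hW : ∀ x y, 0 ≤ W x y) (hW1 : ∀ x, ∑ y, W x y = 1) (ρ : ℝ) : 0 < gallagerSum P W ρ := by
  obtain ⟨x₀, -, hx₀⟩ := exists_lt_of_sum_lt (s := univ) (f := 0) (g := P) (by simp [hP1])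
  obtain ⟨y₀, -, hy₀⟩ :=
    exists_lt_of_sum_lt (s := univ) (f := 0) (g := W x₀) (by simp [hW1])
  have hinner : ∀ y, 0 ≤ ∑ x, P x * W x y ^ (1 / (1 + ρ)) :=
    fun y => sum_nonneg fun x _ => mul_nonneg (hP x) (rpow_nonneg (hW x y) _)
  refine sum_pos' (fun y _ => rpow_nonneg (hinner y) _) ⟨y₀, mem_univ _, rpow_pos_of_pos ?_ _⟩
  exact sum_pos' (fun x _ => mul_nonneg (hP x) (rpow_nonneg (hW x y₀) _))
    ⟨x₀, mem_univ _, mul_pos hx₀ (rpow_pos_of_pos hy₀ _)⟩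

theorem gallagerSum_term_le (hP : ∀ x, 0 ≤ P x) (hP1 : ∑ x, P x = 1) (hW : ∀ x y, 0 ≤ W x y)
    {τ ρ : ℝ} (hτ : 0 < τ) (hρ : 0 ≤ ρ) (y : β) :
    (∑ x, P x * W x y ^ (1 / (1 + ρ))) ^ (1 + ρ) ≤
      2 ^ ρ * ((∑ x, if W x y / ∑ x', P x' * W x' y < τ then P x * W x y else 0) +
        τ ^ (-ρ) * ∑ x, P x * W x y) := by
  set Q := ∑ x, P x * W x y with hQ_def
  set q := 1 / (1 + ρ)
  have hQ : 0 ≤ Q := sum_nonneg fun x _ => mul_nonneg (hP x) (hW x y)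
  have hq0 : q ≠ 0 := by positivity
  have hq1 : q ≤ 1 := (div_le_one (by linarith)).2 (by linarith)
  set low : α → ℝ := fun x => if W x y / Q < τ then W x y else 0
  set high : α → ℝ := fun x => if W x y / Q < τ then 0 else W x y
  have hsplit : ∀ x, W x y ^ q = low x ^ q + high x ^ q := by
    intro x
    simp only [low, high]
    split_ifs <;> simp [zero_rpow hq0]
  have hlow_nonneg : ∀ x, 0 ≤ low x := fun x => by
    simp only [low]
    split_ifs
    exacts [hW x y, le_rfl]
  have hlow : (∑ x, P x * low x ^ q) ^ (1 + ρ) ≤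
      ∑ x, if W x y / Q < τ then P x * W x y else 0 := by
    refine (rpow_sum_mul_rpow_inv_le univ (fun x _ => hP x) hP1 (fun x _ => hlow_nonneg x)
      (by linarith)).trans_eq (sum_congr rfl fun x _ => ?_)
    simp only [low]
    split_ifs <;> simp
  have hhigh : ∑ x, P x * high x ^ q ≤ (τ * Q) ^ (q - 1) * Q := by
    rw [hQ_def, mul_sum]
    refine sum_le_sum fun x _ => ?_
    simp only [high]
    split_ifs with h
    · rw [zero_rpow hq0, mul_zero]
      exact mul_nonneg (rpow_nonneg (by positivity) _) (mul_nonneg (hP x) (hW x y))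
    · -- `W / 0 = 0 < τ`, so only outputs with `Q > 0` reach this branch.
      have hQpos : 0 < Q := by
        refine hQ.lt_of_ne fun hQ0 => h ?_
        rwa [← hQ0, div_zero]
      have hτQ : τ * Q ≤ W x y := (le_div_iff₀ hQpos).1 (not_lt.1 h)
      calc P x * W x y ^ q ≤ P x * ((τ * Q) ^ (q - 1) * W x y) :=
            mul_le_mul_of_nonneg_left (rpow_le_rpow_sub_one_mul (by positivity) hτQ hq1) (hP x)
        _ = (τ * Q) ^ (q - 1) * (P x * W x y) := by ring
  have hhigh_nonneg : 0 ≤ ∑ x, P x * high x ^ q := sum_nonneg fun x _ =>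
    mul_nonneg (hP x) (rpow_nonneg (by simp only [high]; split_ifs; exacts [le_rfl, hW x y]) _)
  calc (∑ x, P x * W x y ^ q) ^ (1 + ρ)
      = (∑ x, P x * low x ^ q + ∑ x, P x * high x ^ q) ^ (1 + ρ) := by
        simp_rw [hsplit, mul_add, sum_add_distrib]
    _ ≤ 2 ^ ρ * ((∑ x, P x * low x ^ q) ^ (1 + ρ) + (∑ x, P x * high x ^ q) ^ (1 + ρ)) := by
        simpa using rpow_add_le_mul_rpow_add_rpow
          (sum_nonneg fun x _ => mul_nonneg (hP x) (rpow_nonneg (hlow_nonneg x) _))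
          hhigh_nonneg (by linarith : 1 ≤ 1 + ρ)
    _ ≤ _ := by
        gcongr
        calc (∑ x, P x * high x ^ q) ^ (1 + ρ) ≤ ((τ * Q) ^ (q - 1) * Q) ^ (1 + ρ) :=
              rpow_le_rpow hhigh_nonneg hhigh (by linarith)
          _ = τ ^ (-ρ) * Q := rpow_mul_rpow_sub_one_mul hτ hQ hρ

theorem gallagerSum_le [Fintype β] (hP : ∀ x, 0 ≤ P x) (hP1 : ∑ x, P x = 1)
    (hW : ∀ x y, 0 ≤ W x y) (hW1 : ∀ x, ∑ y, W x y = 1) {τ ρ : ℝ} (hτ : 0 < τ) (hρ : 0 ≤ ρ) :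
    gallagerSum P W ρ ≤ 2 ^ ρ * (lowDensityProb P W τ + τ ^ (-ρ)) := by
  calc gallagerSum P W ρ ≤ ∑ y, 2 ^ ρ *
        ((∑ x, if W x y / ∑ x', P x' * W x' y < τ then P x * W x y else 0) +
          τ ^ (-ρ) * ∑ x, P x * W x y) :=
        sum_le_sum fun y _ => gallagerSum_term_le hP hP1 hW hτ hρ y
    _ = 2 ^ ρ * (lowDensityProb P W τ + τ ^ (-ρ)) := by
        rw [← mul_sum, sum_add_distrib, ← mul_sum, sum_sum_mul_eq_one hP1 hW1, mul_one,
          lowDensityProb, sum_comm]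

theorem gallagerSum_le_four_mul [Fintype β] (hP : ∀ x, 0 ≤ P x) (hP1 : ∑ x, P x = 1)
    (hW : ∀ x y, 0 ≤ W x y) (hW1 : ∀ x, ∑ y, W x y = 1) {τ ρ : ℝ} (hτ : 0 < τ) (hρ0 : 0 ≤ ρ)
    (hρ1 : ρ ≤ 1) (hlow : lowDensityProb P W τ ≤ τ ^ (-ρ)) :
    gallagerSum P W ρ ≤ 4 * τ ^ (-ρ) := by
  have h2ρ : (2 : ℝ) ^ ρ ≤ 2 := by simpa using rpow_le_rpow_of_exponent_le one_le_two hρ1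
  calc gallagerSum P W ρ ≤ 2 ^ ρ * (lowDensityProb P W τ + τ ^ (-ρ)) :=
        gallagerSum_le hP hP1 hW hW1 hτ hρ0
    _ ≤ 2 * (τ ^ (-ρ) + τ ^ (-ρ)) := by
        have := lowDensityProb_nonneg hP hW τ
        gcongr
    _ = 4 * τ ^ (-ρ) := by ring

end Gallager

theorem prInfDensityLT_eq_lowDensityProb {𝒳 𝒴 : Type*} [Fintype 𝒳] [Fintype 𝒴]
    {P : (n : ℕ) → (Fin n → 𝒳) → ℝ} {W : (n : ℕ) → (Fin n → 𝒳) → (Fin n → 𝒴) → ℝ}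
    (hP : ∀ n x, 0 ≤ P n x) (hW : ∀ n x y, 0 ≤ W n x y) {b : ℝ} (hb : 0 < b) {n : ℕ}
    (hn : (0 : ℝ) < n) :
    prInfDensityLT P W b n = lowDensityProb (P n) (W n) (exp (n * b)) :=
  sum_congr rfl fun x _ => sum_congr rfl fun y _ => if_congr
    (one_div_mul_log_lt_iff hn hb
      (div_nonneg (hW n x y) (sum_nonneg fun x' _ => mul_nonneg (hP n x') (hW n x' y))))
    rfl rfl

theorem le_gallagerE0_of_gallagerSum_le {𝒳 𝒴 : Type*} [Fintype 𝒳] [Fintype 𝒴] {n : ℕ}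
    {Pn : (Fin n → 𝒳) → ℝ} {Wn : (Fin n → 𝒳) → (Fin n → 𝒴) → ℝ} {ρ R C : ℝ} (hn : (0 : ℝ) < n)
    (hC : 0 < C) (hpos : 0 < gallagerSum Pn Wn ρ)
    (hle : gallagerSum Pn Wn ρ ≤ C * exp (n * R) ^ (-ρ)) :
    ρ * R - log C / n ≤ gallagerE0 n Pn Wn ρ := by
  have hlog : log (gallagerSum Pn Wn ρ) ≤ log C - n * (ρ * R) := by
    rw [← exp_mul] at hle
    have := log_le_log hpos hle
    rw [log_mul hC.ne' (exp_pos _).ne', log_exp] at this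
    linarith
  have hE0 : gallagerE0 n Pn Wn ρ = -(log (gallagerSum Pn Wn ρ) / n) := by
    rw [gallagerE0, gallagerSum]; ring
  rw [hE0, le_neg, neg_sub, div_sub' hn.ne', div_le_div_iff_of_pos_right hn]
  linarith

theorem gallager_channel_estimate_general
    {𝒳 𝒴 : Type*} [Fintype 𝒳] [Fintype 𝒴]
    (P : (n : ℕ) → (Fin n → 𝒳) → ℝ)
    (W : (n : ℕ) → (Fin n → 𝒳) → (Fin n → 𝒴) → ℝ)
    (hPnn : ∀ n x, 0 ≤ P n x) (hP1 : ∀ n, ∑ x : Fin n → 𝒳, P n x = 1)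
    (hWnn : ∀ n x y, 0 ≤ W n x y) (hW1 : ∀ n x, ∑ y : Fin n → 𝒴, W n x y = 1)
    (δ : ℝ) (hδ : δ < specInfMutualInfo P W)
    (ε : ℕ → ℝ)
    (hε : ∀ n, ε n = prInfDensityLT P W (specInfMutualInfo P W - δ) n)
    (ρ : ℕ → ℝ)
    (hρ : ∀ n, ρ n = min ((-(1 / 2 : ℝ) * Real.log (ε n)) /
        ((n : ℝ) * (specInfMutualInfo P W - δ))) 1) :
    ∀ n, 1 ≤ n →
      gallagerE0 n (P n) (W n) (ρ n) ≥
        ρ n * (specInfMutualInfo P W - δ) - 3 * Real.log 2 / (n : ℝ) := by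
  intro n hn
  set R := specInfMutualInfo P W - δ
  have hR : 0 < R := sub_pos.2 hδ
  have hn0 : (0 : ℝ) < n := by exact_mod_cast hn
  have hεlow : ε n = lowDensityProb (P n) (W n) (exp (n * R)) :=
    (hε n).trans (prInfDensityLT_eq_lowDensityProb hPnn hWnn hR hn0)
  have hε0 : 0 ≤ ε n := hεlow ▸ lowDensityProb_nonneg (hPnn n) (hWnn n) _
  have hε1 : ε n ≤ 1 := hεlow ▸ lowDensityProb_le_one (hPnn n) (hP1 n) (hWnn n) (hW1 n) _
  have hρ0 : 0 ≤ ρ n :=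
    hρ n ▸ le_min (div_nonneg (by linarith [log_nonpos hε0 hε1]) (by positivity)) zero_le_one
  have hρ1 : ρ n ≤ 1 := hρ n ▸ min_le_right _ _
  have hερ : ε n ≤ exp (n * R) ^ (-ρ n) :=
    le_exp_rpow_neg_of_le_neg_half_log_div hε0 hε1 (by positivity) (hρ n ▸ min_le_left _ _)
  have hG := gallagerSum_le_four_mul (hPnn n) (hP1 n) (hWnn n) (hW1 n) (exp_pos _) hρ0 hρ1
    (hεlow ▸ hερ)
  have hlog4 : log 4 ≤ 3 * log 2 := by
    rw [show (4 : ℝ) = 2 ^ 2 by norm_num, log_pow]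
    push_cast
    linarith [log_pos one_lt_two]
  calc ρ n * R - 3 * log 2 / n ≤ ρ n * R - log 4 / n := by gcongr
    _ ≤ gallagerE0 n (P n) (W n) (ρ n) := le_gallagerE0_of_gallagerSum_le hn0 four_pos
        (gallagerSum_pos (hPnn n) (hP1 n) (hWnn n) (hW1 n) _) hG

theorem gallager_channel_estimate
    {𝒳 𝒴 : Type*} [Fintype 𝒳] [Fintype 𝒴] [Nonempty 𝒳] [Nonempty 𝒴]
    (P : (n : ℕ) → (Fin n → 𝒳) → ℝ)
    (W : (n : ℕ) → (Fin n → 𝒳) → (Fin n → 𝒴) → ℝ)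
    (hPnn : ∀ n x, 0 ≤ P n x) (hP1 : ∀ n, ∑ x : Fin n → 𝒳, P n x = 1)
    (hWnn : ∀ n x y, 0 ≤ W n x y) (hW1 : ∀ n x, ∑ y : Fin n → 𝒴, W n x y = 1)
    (δ : ℝ) (hδ0 : 0 < δ) (hδ : δ < specInfMutualInfo P W)
    (ε : ℕ → ℝ)
    (hε : ∀ n, ε n = prInfDensityLT P W (specInfMutualInfo P W - δ) n)
    (hεpos : ∀ n, 1 ≤ n → 0 < ε n)
    (ρ : ℕ → ℝ)
    (hρ : ∀ n, ρ n = min ((-(1 / 2 : ℝ) * Real.log (ε n)) /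
        ((n : ℝ) * (specInfMutualInfo P W - δ))) 1) :
    ∀ n, 1 ≤ n →
      gallagerE0 n (P n) (W n) (ρ n) ≥
        ρ n * (specInfMutualInfo P W - δ) - 3 * Real.log 2 / (n : ℝ) :=
  gallager_channel_estimate_general P W hPnn hP1 hWnn hW1 δ hδ ε hε ρ hρ
end

section
/- Let A and B be finite nonempty sets and P a probability mass function on A × B. For ρ ∈ [0,1] define φ(ρ) = ln Σ_{y∈B} ( Σ_{x∈A} P(x,y)^{1/(1+ρ)} )^{1+ρ}, and define the tilted joint probability mass function P̄_ρ(x,y) = P(x,y)^{1/(1+ρ)} · ( Σ_{x'∈A} P(x',y)^{1/(1+ρ)} )^{ρ} / Σ_{y'∈B} ( Σ_{x'∈A} P(x',y')^{1/(1+ρ)} )^{1+ρ}. Assume P(x,y) > 0 for all (x,y). Then φ is differentiable on [0,1] and φ'(ρ) = H(X̄(ρ)|Ȳ(ρ)), the conditional Shannon entropy (in nats) of the first coordinate given the second under P̄_ρ, i.e., φ'(ρ) = −Σ_{x,y} P̄_ρ(x,y)·ln( P̄_ρ(x,y)/Σ_{x'} P̄_ρ(x',y) ). -/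
/-!
Write `t = 1/(1+ρ)` and `G_y = ∑ₓ P(x,y)^t`. Since `d/dρ p^t = negMulLog (p^t) / (1+ρ)`, the
derivative of `G_y^(1+ρ)` is `G_y^(1+ρ)` times the Shannon entropy of the escort distribution
`P(·,y)^t / G_y`. Differentiating the logarithm therefore averages these entropies against the
weights `G_y^(1+ρ) / ∑ G^(1+ρ)`. These weights are the `Y`-marginal of `P̄_ρ` and the escort
distributions are its conditionals, so the chain rule `H(X|Y) = ∑_y P(y) H(X|Y=y)` identifies
the average with the conditional entropy.
-/

open Real Finset

namespace Gallager

variable {ι κ : Type*} [Fintype ι] [Fintype κ]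

noncomputable def condEntropy (Q : ι → κ → ℝ) : ℝ :=
  -∑ x, ∑ y, Q x y * log (Q x y / ∑ x', Q x' y)

noncomputable def escort (p : ι → ℝ) (t : ℝ) (x : ι) : ℝ :=
  p x ^ t / ∑ x', p x' ^ t

noncomputable def tilted (P : ι → κ → ℝ) (ρ : ℝ) (x : ι) (y : κ) : ℝ :=
  P x y ^ (1 / (1 + ρ)) * (∑ x', P x' y ^ (1 / (1 + ρ))) ^ ρ /
    ∑ y', (∑ x', P x' y' ^ (1 / (1 + ρ))) ^ (1 + ρ)

noncomputable def tiltedMarginal (P : ι → κ → ℝ) (ρ : ℝ) (y : κ) : ℝ :=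
  (∑ x, P x y ^ (1 / (1 + ρ))) ^ (1 + ρ) / ∑ y', (∑ x, P x y' ^ (1 / (1 + ρ))) ^ (1 + ρ)

theorem condEntropy_mul_of_sum_eq_one (w : κ → ℝ) (q : ι → κ → ℝ) (hq : ∀ y, ∑ x, q x y = 1) :
    condEntropy (fun x y => w y * q x y) = ∑ y, w y * ∑ x, negMulLog (q x y) := by
  have hw : ∀ y, ∑ x', w y * q x' y = w y := fun y => by rw [← mul_sum, hq, mul_one]
  rw [condEntropy, sum_comm, ← sum_neg_distrib]
  refine sum_congr rfl fun y _ => ?_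
  rw [hw, mul_sum, ← sum_neg_distrib]
  refine sum_congr rfl fun x _ => ?_
  rcases eq_or_ne (w y) 0 with h | h
  · simp [h]
  · rw [mul_div_cancel_left₀ _ h, negMulLog]
    ring

theorem sum_escort {p : ι → ℝ} {t : ℝ} (h : ∑ x, p x ^ t ≠ 0) : ∑ x, escort p t x = 1 := by
  simp only [escort, ← sum_div, div_self h]

theorem sum_rpow_pos [Nonempty ι] {p : ι → ℝ} (hp : ∀ x, 0 < p x) (t : ℝ) :
    0 < ∑ x, p x ^ t :=
  sum_pos (fun x _ => rpow_pos_of_pos (hp x) t) univ_nonempty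

theorem mul_sum_negMulLog_div_sum (a : ι → ℝ) (ha : ∑ x, a x ≠ 0) :
    (∑ x, a x) * ∑ x, negMulLog (a x / ∑ x', a x') =
      ∑ x, negMulLog (a x) + (∑ x, a x) * log (∑ x, a x) := by
  set S := ∑ x, a x
  have hsplit : ∑ x, negMulLog (a x) = S * ∑ x, negMulLog (a x / S) + negMulLog S :=
    calc ∑ x, negMulLog (a x) = ∑ x, (S * negMulLog (a x / S) + a x / S * negMulLog S) :=
          sum_congr rfl fun x _ => by rw [← negMulLog_mul, div_mul_cancel₀ _ ha]
      _ = _ := by rw [sum_add_distrib, ← mul_sum, ← sum_mul, ← sum_div, div_self ha, one_mul]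
  rw [hsplit, negMulLog]
  ring

theorem hasDerivAt_rpow_one_div_one_add {p ρ : ℝ} (hp : 0 < p) (hρ : 1 + ρ ≠ 0) :
    HasDerivAt (fun u => p ^ (1 / (1 + u))) (negMulLog (p ^ (1 / (1 + ρ))) / (1 + ρ)) ρ := by
  have h : HasDerivAt (fun u : ℝ => 1 / (1 + u)) (-1 / (1 + ρ) ^ 2) ρ := by
    simpa [one_div] using ((hasDerivAt_id ρ).const_add 1).fun_inv hρ
  convert h.const_rpow hp using 1
  rw [negMulLog, log_rpow hp]
  field_simp

theorem hasDerivAt_sum_rpow_one_div_one_add_rpow [Nonempty ι] {p : ι → ℝ} (hp : ∀ x, 0 < p x)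
    {ρ : ℝ} (hρ : 0 < 1 + ρ) :
    HasDerivAt (fun u => (∑ x, p x ^ (1 / (1 + u))) ^ (1 + u))
      ((∑ x, p x ^ (1 / (1 + ρ))) ^ (1 + ρ) * ∑ x, negMulLog (escort p (1 / (1 + ρ)) x)) ρ := by
  set S := ∑ x, p x ^ (1 / (1 + ρ))
  have hS : 0 < S := sum_rpow_pos hp _
  have hsum := HasDerivAt.fun_sum fun x (_ : x ∈ univ) =>
    hasDerivAt_rpow_one_div_one_add (hp x) hρ.ne'
  convert hsum.rpow ((hasDerivAt_id' ρ).const_add 1) hS using 1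
  simp only [escort]
  rw [rpow_add hS, rpow_one, mul_comm S, mul_assoc,
    mul_sum_negMulLog_div_sum (fun x => p x ^ (1 / (1 + ρ))) hS.ne', ← sum_div,
    add_sub_cancel_left]
  field_simp
  ring

theorem tilted_eq_tiltedMarginal_mul_escort [Nonempty ι] {P : ι → κ → ℝ} (hP : ∀ x y, 0 < P x y)
    (ρ : ℝ) (x : ι) (y : κ) :
    tilted P ρ x y = tiltedMarginal P ρ y * escort (P · y) (1 / (1 + ρ)) x := by
  have hS := sum_rpow_pos (hP · y) (1 / (1 + ρ))
  rw [tilted, tiltedMarginal, escort, rpow_add hS, rpow_one]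
  field_simp

theorem hasDerivAt_log_sum_sum_rpow [Nonempty ι] [Nonempty κ] {P : ι → κ → ℝ}
    (hP : ∀ x y, 0 < P x y) {ρ : ℝ} (hρ : 0 < 1 + ρ) :
    HasDerivAt (fun u => log (∑ y, (∑ x, P x y ^ (1 / (1 + u))) ^ (1 + u)))
      (∑ y, tiltedMarginal P ρ y * ∑ x, negMulLog (escort (P · y) (1 / (1 + ρ)) x)) ρ := by
  have hF : 0 < ∑ y, (∑ x, P x y ^ (1 / (1 + ρ))) ^ (1 + ρ) :=
    sum_pos (fun y _ => rpow_pos_of_pos (sum_rpow_pos (hP · y) _) _) univ_nonempty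
  convert (HasDerivAt.fun_sum fun y (_ : y ∈ univ) =>
    hasDerivAt_sum_rpow_one_div_one_add_rpow (hP · y) hρ).log hF.ne' using 1
  simp only [tiltedMarginal, sum_div, div_mul_eq_mul_div]

end Gallager

open Gallager

theorem deriv_source_gallager_eq_cond_entropy_general
    {A B : Type*} [Fintype A] [Fintype B] [Nonempty A] [Nonempty B]
    (P : A → B → ℝ) (hpos : ∀ x y, 0 < P x y)
    (φ : ℝ → ℝ)
    (hφ : ∀ ρ : ℝ, φ ρ =
      Real.log (∑ y, (∑ x, P x y ^ (1 / (1 + ρ))) ^ (1 + ρ)))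
    (Pb : ℝ → A → B → ℝ)
    (hPb : ∀ ρ x y, Pb ρ x y =
      P x y ^ (1 / (1 + ρ)) * (∑ x', P x' y ^ (1 / (1 + ρ))) ^ ρ /
        ∑ y', (∑ x', P x' y' ^ (1 / (1 + ρ))) ^ (1 + ρ)) :
    ∀ ρ ∈ Set.Icc (0 : ℝ) 1,
      HasDerivAt φ
        (-∑ x, ∑ y, Pb ρ x y * Real.log (Pb ρ x y / ∑ x', Pb ρ x' y)) ρ := by
  intro ρ hρ
  have hPb_eq : Pb ρ = fun x y => tiltedMarginal P ρ y * escort (P · y) (1 / (1 + ρ)) x :=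
    funext₂ fun x y => (hPb ρ x y).trans (tilted_eq_tiltedMarginal_mul_escort hpos ρ x y)
  rw [funext hφ]
  convert hasDerivAt_log_sum_sum_rpow hpos (by linarith [hρ.1] : 0 < 1 + ρ) using 1
  change condEntropy (Pb ρ) = _
  rw [hPb_eq]
  exact condEntropy_mul_of_sum_eq_one _ _ fun y => sum_escort (sum_rpow_pos (hpos · y) _).ne'

theorem deriv_source_gallager_eq_cond_entropy
    {A B : Type*} [Fintype A] [Fintype B] [Nonempty A] [Nonempty B]
    (P : A → B → ℝ) (hpos : ∀ x y, 0 < P x y)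
    (hsum : ∑ x, ∑ y, P x y = 1)
    (φ : ℝ → ℝ)
    (hφ : ∀ ρ : ℝ, φ ρ =
      Real.log (∑ y, (∑ x, P x y ^ (1 / (1 + ρ))) ^ (1 + ρ)))
    (Pb : ℝ → A → B → ℝ)
    (hPb : ∀ ρ x y, Pb ρ x y =
      P x y ^ (1 / (1 + ρ)) * (∑ x', P x' y ^ (1 / (1 + ρ))) ^ ρ /
        ∑ y', (∑ x', P x' y' ^ (1 / (1 + ρ))) ^ (1 + ρ)) :
    ∀ ρ ∈ Set.Icc (0 : ℝ) 1,
      HasDerivAt φ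
        (-∑ x, ∑ y, Pb ρ x y * Real.log (Pb ρ x y / ∑ x', Pb ρ x' y)) ρ :=
  deriv_source_gallager_eq_cond_entropy_general P hpos φ hφ Pb hPb
end

section
/- Let 𝒜 and ℬ be finite nonempty sets, W a channel assigning to each x ∈ 𝒜 a probability mass function W(·|x) on ℬ, Q a probability mass function on 𝒜, M ≥ 2 an integer, and ρ ∈ [0,1]. Then there exist an encoder f : {1,…,M} → 𝒜 and a decoder φ : ℬ → {1,…,M} such that the average decoding error probability satisfies (1/M)·Σ_{m=1}^{M} Σ_{y : φ(y) ≠ m} W(y|f(m)) ≤ (M−1)^{ρ} · Σ_{y∈ℬ} ( Σ_{x∈𝒜} Q(x)·W(y|x)^{1/(1+ρ)} )^{1+ρ}. -/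
/-!
Draw the `M` codewords i.i.d. from `Q` and decode by maximum likelihood. If the decoder errs on
message `m` at output `y`, some other codeword is at least as likely, so with `s = 1/(1+ρ)` the
error contribution `W(y|x_m)` is at most `W(y|x_m)^s (∑_{m'≠m} W(y|x_{m'})^s)^ρ`. Averaged over
the codebook, `x_m` is independent of the other codewords, and Jensen's inequality for the concave
`t ↦ t^ρ` moves the average inside the power, which leaves
`(M-1)^ρ (∑_x Q(x) W(y|x)^s)^(1+ρ)`. Some codebook is no worse than the average.
-/

open Finset Real

lemma exists_le_sum_mul {ι : Type*} [Fintype ι] {w E : ι → ℝ} (hw₀ : ∀ i, 0 ≤ w i)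
    (hw₁ : ∑ i, w i = 1) : ∃ i, E i ≤ ∑ i, w i * E i := by
  obtain ⟨i, -, hi⟩ := (concaveOn_id convex_univ).exists_le_of_centerMass (t := univ) (p := E)
    (fun i _ => hw₀ i) (by simp [hw₁]) (fun _ _ => Set.mem_univ _)
  exact ⟨i, by simpa [centerMass, hw₁] using hi⟩

lemma sum_mul_rpow_le_rpow_sum_mul {ι : Type*} [Fintype ι] {w t : ι → ℝ} (hw₀ : ∀ i, 0 ≤ w i)
    (hw₁ : ∑ i, w i = 1) (ht : ∀ i, 0 ≤ t i) {ρ : ℝ} (hρ₀ : 0 ≤ ρ) (hρ₁ : ρ ≤ 1) :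
    ∑ i, w i * t i ^ ρ ≤ (∑ i, w i * t i) ^ ρ :=
  (concaveOn_rpow hρ₀ hρ₁).le_map_sum (fun i _ => hw₀ i) hw₁ fun i _ => ht i

lemma le_rpow_mul_rpow_of_rpow_le {w T ρ : ℝ} (hw : 0 ≤ w) (hρ : 0 ≤ ρ)
    (h : w ^ (1 / (1 + ρ)) ≤ T) : w ≤ w ^ (1 / (1 + ρ)) * T ^ ρ := by
  set s := 1 / (1 + ρ)
  have hs : s + s * ρ = 1 := by rw [← mul_one_add]; exact one_div_mul_cancel (by positivity)
  calc w = w ^ s * (w ^ s) ^ ρ := by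
        rw [← rpow_mul hw, ← rpow_add' hw (by rw [hs]; norm_num), hs, rpow_one]
    _ ≤ w ^ s * T ^ ρ := by gcongr

section iidMean

variable {𝒜 ι : Type*} [Fintype 𝒜] [Fintype ι] [DecidableEq ι]

noncomputable def iidMean (Q : 𝒜 → ℝ) (F : (ι → 𝒜) → ℝ) : ℝ := ∑ f, (∏ j, Q (f j)) * F f

variable {Q : 𝒜 → ℝ}

lemma sum_prod_apply_eq_one (hQ₁ : ∑ x, Q x = 1) : ∑ f : ι → 𝒜, ∏ j, Q (f j) = 1 := by
  simp [← Fintype.prod_sum, hQ₁]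

lemma iidMean_mul_split (m : ι) (A : 𝒜 → ℝ) (B : ({j // j ≠ m} → 𝒜) → ℝ) :
    iidMean Q (fun f => A (f m) * B (fun j => f j)) = (∑ x, Q x * A x) * iidMean Q B := by
  have hsplit (f : ι → 𝒜) : (∏ j, Q (f j)) * (A (f m) * B (fun j => f j))
      = Q (f m) * A (f m) * ((∏ j : {j // j ≠ m}, Q (f j)) * B (fun j => f j)) := by
    rw [Fintype.prod_eq_mul_prod_subtype_ne _ m]; ring
  let G : 𝒜 × ({j // j ≠ m} → 𝒜) → ℝ := fun p => Q p.1 * A p.1 * ((∏ j, Q (p.2 j)) * B p.2)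
  calc iidMean Q (fun f => A (f m) * B (fun j => f j))
      = ∑ f, G (Equiv.piSplitAt m (fun _ => 𝒜) f) := sum_congr rfl fun f _ => hsplit f
    _ = ∑ p, G p := Equiv.sum_comp _ G
    _ = (∑ x, Q x * A x) * iidMean Q B := by
      rw [Fintype.sum_prod_type, iidMean, sum_mul_sum]

lemma iidMean_apply_coord (hQ₁ : ∑ x, Q x = 1) (i : ι) (h : 𝒜 → ℝ) :
    iidMean Q (fun f => h (f i)) = ∑ x, Q x * h x := by
  simpa [iidMean, sum_prod_apply_eq_one hQ₁] using iidMean_mul_split (Q := Q) i h fun _ => 1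

lemma iidMean_sum {κ : Type*} (s : Finset κ) (F : κ → (ι → 𝒜) → ℝ) :
    iidMean Q (fun f => ∑ k ∈ s, F k f) = ∑ k ∈ s, iidMean Q (F k) := by
  simp only [iidMean, mul_sum]
  exact sum_comm

lemma iidMean_const_mul (c : ℝ) (F : (ι → 𝒜) → ℝ) :
    iidMean Q (fun f => c * F f) = c * iidMean Q F := by
  simp only [iidMean, mul_sum]
  exact sum_congr rfl fun _ _ => by ring

lemma iidMean_mono (hQ₀ : ∀ x, 0 ≤ Q x) {F G : (ι → 𝒜) → ℝ} (h : ∀ f, F f ≤ G f) :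
    iidMean Q F ≤ iidMean Q G :=
  sum_le_sum fun f _ => mul_le_mul_of_nonneg_left (h f) (prod_nonneg fun _ _ => hQ₀ _)

lemma exists_le_iidMean (hQ₀ : ∀ x, 0 ≤ Q x) (hQ₁ : ∑ x, Q x = 1) (F : (ι → 𝒜) → ℝ) :
    ∃ f, F f ≤ iidMean Q F :=
  exists_le_sum_mul (fun _ => prod_nonneg fun _ _ => hQ₀ _) (sum_prod_apply_eq_one hQ₁)

lemma iidMean_rpow_le (hQ₀ : ∀ x, 0 ≤ Q x) (hQ₁ : ∑ x, Q x = 1) {F : (ι → 𝒜) → ℝ}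
    (hF : ∀ f, 0 ≤ F f) {ρ : ℝ} (hρ₀ : 0 ≤ ρ) (hρ₁ : ρ ≤ 1) :
    iidMean Q (fun f => F f ^ ρ) ≤ iidMean Q F ^ ρ :=
  sum_mul_rpow_le_rpow_sum_mul (fun _ => prod_nonneg fun _ _ => hQ₀ _)
    (sum_prod_apply_eq_one hQ₁) hF hρ₀ hρ₁

lemma iidMean_mul_rpow_sum_le (hQ₀ : ∀ x, 0 ≤ Q x) (hQ₁ : ∑ x, Q x = 1) {U : 𝒜 → ℝ}
    (hU : ∀ x, 0 ≤ U x) {ρ : ℝ} (hρ₀ : 0 ≤ ρ) (hρ₁ : ρ ≤ 1) (m : ι) :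
    iidMean Q (fun f => U (f m) * (∑ j : {j // j ≠ m}, U (f j)) ^ ρ)
      ≤ ((Fintype.card ι : ℝ) - 1) ^ ρ * (∑ x, Q x * U x) ^ (1 + ρ) := by
  set a := ∑ x, Q x * U x
  have ha : 0 ≤ a := sum_nonneg fun x _ => mul_nonneg (hQ₀ x) (hU x)
  have hcard : ((Fintype.card {j // j ≠ m} : ℕ) : ℝ) = (Fintype.card ι : ℝ) - 1 := by
    rw [Fintype.card_subtype_compl, Fintype.card_subtype_eq,
      Nat.cast_sub (Fintype.card_pos_iff.2 ⟨m⟩), Nat.cast_one]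
  have hmean : iidMean Q (fun g : {j // j ≠ m} → 𝒜 => ∑ j, U (g j))
      = ((Fintype.card ι : ℝ) - 1) * a := by
    simp only [iidMean_sum, iidMean_apply_coord hQ₁]
    rw [sum_const, card_univ, nsmul_eq_mul, hcard]
  calc iidMean Q (fun f => U (f m) * (∑ j : {j // j ≠ m}, U (f j)) ^ ρ)
      = a * iidMean Q (fun g : {j // j ≠ m} → 𝒜 => (∑ j, U (g j)) ^ ρ) :=
        iidMean_mul_split m U fun g => (∑ j, U (g j)) ^ ρ
    _ ≤ a * (((Fintype.card ι : ℝ) - 1) * a) ^ ρ := by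
        rw [← hmean]
        gcongr
        exact iidMean_rpow_le hQ₀ hQ₁ (fun g => sum_nonneg fun _ _ => hU _) hρ₀ hρ₁
    _ = ((Fintype.card ι : ℝ) - 1) ^ ρ * a ^ (1 + ρ) := by
        rw [mul_rpow (by rw [← hcard]; positivity) ha, rpow_add' ha (by positivity), rpow_one]
        ring

end iidMean

section mlDecoder

variable {𝒜 ℬ ι : Type*}

noncomputable def mlDecoder [Finite ι] [Nonempty ι] (W : 𝒜 → ℬ → ℝ) (f : ι → 𝒜) (y : ℬ) : ι :=
  (Finite.exists_max fun m => W (f m) y).choose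

lemma le_mlDecoder [Finite ι] [Nonempty ι] (W : 𝒜 → ℬ → ℝ) (f : ι → 𝒜) (y : ℬ) (m : ι) :
    W (f m) y ≤ W (f (mlDecoder W f y)) y :=
  (Finite.exists_max fun m => W (f m) y).choose_spec m

noncomputable def errorProb [Fintype ℬ] [DecidableEq ι] (W : 𝒜 → ℬ → ℝ) (f : ι → 𝒜)
    (φ : ℬ → ι) (m : ι) : ℝ :=
  ∑ y, if φ y ≠ m then W (f m) y else 0

variable [Fintype ι] [DecidableEq ι] [Nonempty ι] {W : 𝒜 → ℬ → ℝ}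

lemma ite_mlDecoder_ne_le (hW : ∀ x y, 0 ≤ W x y) (f : ι → 𝒜) (m : ι) (y : ℬ) {ρ : ℝ}
    (hρ : 0 ≤ ρ) :
    (if mlDecoder W f y ≠ m then W (f m) y else 0)
      ≤ W (f m) y ^ (1 / (1 + ρ)) * (∑ j : {j // j ≠ m}, W (f j) y ^ (1 / (1 + ρ))) ^ ρ := by
  split_ifs with hm
  · refine le_rpow_mul_rpow_of_rpow_le (hW _ _) hρ ?_
    calc W (f m) y ^ (1 / (1 + ρ)) ≤ W (f (mlDecoder W f y)) y ^ (1 / (1 + ρ)) := by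
          gcongr
          · exact hW _ _
          · exact le_mlDecoder W f y m
      _ ≤ ∑ j : {j // j ≠ m}, W (f j) y ^ (1 / (1 + ρ)) :=
          single_le_sum (f := fun j : {j // j ≠ m} => W (f j) y ^ (1 / (1 + ρ)))
            (fun _ _ => rpow_nonneg (hW _ _) _) (mem_univ ⟨_, hm⟩)
  · exact mul_nonneg (rpow_nonneg (hW _ _) _)
      (rpow_nonneg (sum_nonneg fun _ _ => rpow_nonneg (hW _ _) _) _)

lemma iidMean_errorProb_mlDecoder_le [Fintype 𝒜] [Fintype ℬ] (hW : ∀ x y, 0 ≤ W x y)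
    {Q : 𝒜 → ℝ} (hQ₀ : ∀ x, 0 ≤ Q x) (hQ₁ : ∑ x, Q x = 1) {ρ : ℝ} (hρ₀ : 0 ≤ ρ) (hρ₁ : ρ ≤ 1)
    (m : ι) :
    iidMean Q (fun f => errorProb W f (mlDecoder W f) m)
      ≤ ((Fintype.card ι : ℝ) - 1) ^ ρ * ∑ y, (∑ x, Q x * W x y ^ (1 / (1 + ρ))) ^ (1 + ρ) := by
  rw [mul_sum]
  simp only [errorProb, iidMean_sum]
  gcongr with y
  exact (iidMean_mono hQ₀ fun f => ite_mlDecoder_ne_le hW f m y hρ₀).trans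
    (iidMean_mul_rpow_sum_le hQ₀ hQ₁ (fun x => rpow_nonneg (hW x y) _) hρ₀ hρ₁ m)

end mlDecoder

open scoped Classical

theorem gallager_random_coding_bound_general
    {𝒜 ℬ : Type*} [Fintype 𝒜] [Fintype ℬ]
    (W : 𝒜 → ℬ → ℝ) (hWnn : ∀ x y, 0 ≤ W x y)
    (Q : 𝒜 → ℝ) (hQnn : ∀ x, 0 ≤ Q x) (hQ1 : ∑ x, Q x = 1)
    (M : ℕ) (hM : 2 ≤ M)
    (ρ : ℝ) (hρ : ρ ∈ Set.Icc (0 : ℝ) 1) :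
    ∃ f : Fin M → 𝒜, ∃ φ : ℬ → Fin M,
      (1 / (M : ℝ)) * ∑ m : Fin M, ∑ y : ℬ, (if φ y ≠ m then W (f m) y else 0)
        ≤ ((M : ℝ) - 1) ^ ρ *
          ∑ y, (∑ x, Q x * W x y ^ (1 / (1 + ρ))) ^ (1 + ρ) := by
  have : Nonempty (Fin M) := ⟨⟨0, by omega⟩⟩
  let avgError (f : Fin M → 𝒜) : ℝ := 1 / (M : ℝ) * ∑ m, errorProb W f (mlDecoder W f) m
  obtain ⟨f, hf⟩ := exists_le_iidMean hQnn hQ1 avgError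
  refine ⟨f, mlDecoder W f, hf.trans ?_⟩
  have hM₀ : (M : ℝ) ≠ 0 := Nat.cast_ne_zero.2 (by omega)
  calc iidMean Q avgError
      = 1 / (M : ℝ) * ∑ m : Fin M, iidMean Q (fun f => errorProb W f (mlDecoder W f) m) := by
        rw [iidMean_const_mul, iidMean_sum]
    _ ≤ 1 / (M : ℝ) * ∑ _m : Fin M,
          ((M : ℝ) - 1) ^ ρ * ∑ y, (∑ x, Q x * W x y ^ (1 / (1 + ρ))) ^ (1 + ρ) := by
        gcongr with m
        simpa only [Fintype.card_fin] using iidMean_errorProb_mlDecoder_le hWnn hQnn hQ1 hρ.1 hρ.2 m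
    _ = ((M : ℝ) - 1) ^ ρ * ∑ y, (∑ x, Q x * W x y ^ (1 / (1 + ρ))) ^ (1 + ρ) := by
        rw [sum_const, card_univ, Fintype.card_fin, nsmul_eq_mul, ← mul_assoc,
          one_div_mul_cancel hM₀, one_mul]

theorem gallager_random_coding_bound
    {𝒜 ℬ : Type*} [Fintype 𝒜] [Fintype ℬ] [Nonempty 𝒜] [Nonempty ℬ]
    (W : 𝒜 → ℬ → ℝ) (hWnn : ∀ x y, 0 ≤ W x y) (hW1 : ∀ x, ∑ y, W x y = 1)
    (Q : 𝒜 → ℝ) (hQnn : ∀ x, 0 ≤ Q x) (hQ1 : ∑ x, Q x = 1)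
    (M : ℕ) (hM : 2 ≤ M)
    (ρ : ℝ) (hρ : ρ ∈ Set.Icc (0 : ℝ) 1) :
    ∃ f : Fin M → 𝒜, ∃ φ : ℬ → Fin M,
      (1 / (M : ℝ)) * ∑ m : Fin M, ∑ y : ℬ, (if φ y ≠ m then W (f m) y else 0)
        ≤ ((M : ℝ) - 1) ^ ρ *
          ∑ y, (∑ x, Q x * W x y ^ (1 / (1 + ρ))) ^ (1 + ρ) :=
  gallager_random_coding_bound_general W hWnn Q hQnn hQ1 M hM ρ hρ
end

section
/- Let W be a general channel with finite input alphabet 𝒳 and finite output alphabet 𝒴, and let C(W) = sup_X I_inf(X;Y) be its capacity, the supremum over all general sources X over 𝒳 (with Y the corresponding output). Then for every rate R with 0 < R < C(W), there exists for each n an encoder f_n : {1,…,M_n} → 𝒳^n with M_n = ⌈e^{nR}⌉ messages and a decoder φ_n : 𝒴^n → {1,…,M_n} such that the average decoding error probability P_e^{(n)} = (1/M_n)·Σ_{m=1}^{M_n} Σ_{y^n : φ_n(y^n) ≠ m} W^n(y^n|f_n(m)) tends to 0 as n → ∞. -/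
/-!
Random coding with a threshold decoder (Feinstein, Verdú–Han). Pick a source `P` and a
rate `β > R` such that the information density `iₙ = (1/n) log (Wⁿ(y|x) / P_{Yⁿ}(y))`
satisfies `Pr[iₙ < β] → 0`, and put `c = (R + β) / 2`. Draw the `M = ⌈e^{nR}⌉` codewords
i.i.d. from `Pₙ` and decode `y` to any message whose codeword has information density
above `c` with `y`. A message is decoded wrongly only if its own pair falls below `c`
(probability at most `Pr[iₙ < β]`) or a competing codeword clears the threshold; since
`iₙ > c` forces `P_{Yⁿ}(y) ≤ e^{-nc} Wⁿ(y|x)`, and a competitor is independent of the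
channel output, each of the `M - 1` competitors does so with probability at most
`e^{-nc}`. The error averaged over codebooks is therefore at most
`Pr[iₙ < β] + e^{-n(c-R)}`, and some codebook does at least as well.
-/

open Real Filter
open scoped Classical

/-- The capacity `C(W) = sup_X I_inf(X;Y)` of a general channel, the supremum over
all general sources `X` (sequences of probability mass functions on `𝒳ⁿ`). -/
noncomputable def capacity {𝒳 𝒴 : Type*} [Fintype 𝒳] [Fintype 𝒴]
    (W : (n : ℕ) → (Fin n → 𝒳) → (Fin n → 𝒴) → ℝ) : ℝ :=
  sSup {I : ℝ | ∃ P : (n : ℕ) → (Fin n → 𝒳) → ℝ,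
    (∀ n x, 0 ≤ P n x) ∧ (∀ n, ∑ x : Fin n → 𝒳, P n x = 1) ∧
    I = specInfMutualInfo P W}

open Finset

section IidCodebook

variable {ι A : Type*} [Fintype ι] [DecidableEq ι] [Fintype A] {P : A → ℝ}

variable (P) in
lemma sum_prod_pi_mul_prod (h : ι → A → ℝ) :
    ∑ f : ι → A, (∏ i, P (f i)) * ∏ i, h i (f i) = ∏ i, ∑ x, P x * h i x := by
  simp_rw [← prod_mul_distrib]
  exact (Fintype.prod_sum fun i x => P x * h i x).symm

lemma sum_prod_pi_eq_one (hP1 : ∑ x, P x = 1) : ∑ f : ι → A, ∏ i, P (f i) = 1 := by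
  simpa [hP1] using sum_prod_pi_mul_prod (ι := ι) P fun _ _ => 1

lemma sum_prod_pi_mul_apply (hP1 : ∑ x, P x = 1) (m : ι) (g : A → ℝ) :
    ∑ f : ι → A, (∏ i, P (f i)) * g (f m) = ∑ x, P x * g x := by
  simpa [hP1] using sum_prod_pi_mul_prod P fun i x => if i = m then g x else 1

lemma sum_prod_pi_mul_apply_mul_apply (hP1 : ∑ x, P x = 1) {m m' : ι} (hm : m ≠ m')
    (g g' : A → ℝ) :
    ∑ f : ι → A, (∏ i, P (f i)) * (g (f m) * g' (f m')) =
      (∑ x, P x * g x) * ∑ x, P x * g' x := by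
  have := sum_prod_pi_mul_prod P fun i x =>
    (if i = m then g x else 1) * (if i = m' then g' x else 1)
  simp only [prod_mul_distrib, prod_ite_eq', mem_univ, if_true] at this
  rw [this, Fintype.prod_eq_mul m m' hm]
  · simp [hm, hm.symm]
  · rintro i ⟨him, him'⟩
    simp [him, him', hP1]

end IidCodebook

lemma exists_le_of_sum_mul_le {α : Type*} [Fintype α] {q r : α → ℝ} (hq0 : ∀ a, 0 ≤ q a)
    (hq1 : ∑ a, q a = 1) {b : ℝ} (h : ∑ a, q a * r a ≤ b) : ∃ a, r a ≤ b := by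
  have : Nonempty α := by
    by_contra hα
    simp [not_nonempty_iff.1 hα] at hq1
  obtain ⟨a, ha⟩ := Finite.exists_min r
  refine ⟨a, le_trans ?_ h⟩
  calc r a = ∑ b, q b * r a := by rw [← sum_mul, hq1, one_mul]
    _ ≤ ∑ b, q b * r b := sum_le_sum fun b _ => mul_le_mul_of_nonneg_left (ha b) (hq0 b)

section OneShotCoding

variable {A B : Type*} {M : ℕ}

noncomputable def avgError [Fintype B] (V : A → B → ℝ) (f : Fin M → A) (φ : B → Fin M) : ℝ :=
  1 / (M : ℝ) * ∑ m, ∑ y, if φ y ≠ m then V (f m) y else 0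

lemma avgError_nonneg [Fintype B] {V : A → B → ℝ} (hV0 : ∀ x y, 0 ≤ V x y) (f : Fin M → A)
    (φ : B → Fin M) : 0 ≤ avgError V f φ := by
  refine mul_nonneg (by positivity) (sum_nonneg fun m _ => sum_nonneg fun y _ => ?_)
  split_ifs
  exacts [hV0 _ _, le_rfl]

noncomputable def thresholdDecoder [NeZero M] (S : A → B → Prop) (f : Fin M → A) (y : B) :
    Fin M :=
  if h : ∃ m, S (f m) y then h.choose else 0

lemma not_or_exists_of_thresholdDecoder_ne [NeZero M] {S : A → B → Prop} {f : Fin M → A}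
    {y : B} {m : Fin M} (h : thresholdDecoder S f y ≠ m) :
    ¬ S (f m) y ∨ ∃ m' ≠ m, S (f m') y := by
  by_cases hm : S (f m) y
  · have hex : ∃ m, S (f m) y := ⟨m, hm⟩
    unfold thresholdDecoder at h
    rw [dif_pos hex] at h
    exact Or.inr ⟨_, h, hex.choose_spec⟩
  · exact Or.inl hm

lemma ite_thresholdDecoder_ne_le [NeZero M] (S : A → B → Prop) (f : Fin M → A) (y : B)
    (m : Fin M) {v : ℝ} (hv : 0 ≤ v) :
    (if thresholdDecoder S f y ≠ m then v else 0) ≤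
      (if S (f m) y then 0 else v) + ∑ m' ∈ univ.erase m, if S (f m') y then v else 0 := by
  have hsum : 0 ≤ ∑ m' ∈ univ.erase m, if S (f m') y then v else 0 :=
    sum_nonneg fun _ _ => by split_ifs <;> simp [hv]
  split_ifs with hne hm
  · obtain hm' | ⟨m', hm'm, hm'⟩ := not_or_exists_of_thresholdDecoder_ne hne
    · exact absurd hm hm'
    · calc v = if S (f m') y then v else 0 := (if_pos hm').symm
        _ ≤ _ := single_le_sum (f := fun m' => if S (f m') y then v else 0)
            (fun _ _ => by split_ifs <;> simp [hv]) (mem_erase.2 ⟨hm'm, mem_univ _⟩)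
        _ = _ := (zero_add _).symm
  · linarith
  · positivity
  · linarith

end OneShotCoding

section RandomCoding

variable {ι A B : Type*} [Fintype A] [Fintype B] {P : A → ℝ} {V : A → B → ℝ}
  {S : A → B → Prop} {ε : ℝ}

lemma sum_prod_pi_mul_sum_ite_le [Fintype ι] [DecidableEq ι] (hP0 : ∀ x, 0 ≤ P x)
    (hP1 : ∑ x, P x = 1) (hV0 : ∀ x y, 0 ≤ V x y) (hV1 : ∀ x, ∑ y, V x y = 1) (hε : 0 ≤ ε)
    (hS : ∀ x y, S x y → ∑ x', P x' * V x' y ≤ ε * V x y) {m m' : ι} (hm : m ≠ m') :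
    ∑ f : ι → A, (∏ i, P (f i)) * ∑ y, (if S (f m') y then V (f m) y else 0) ≤ ε := by
  calc ∑ f : ι → A, (∏ i, P (f i)) * ∑ y, (if S (f m') y then V (f m) y else 0)
      = ∑ y, ∑ f : ι → A, (∏ i, P (f i)) * (V (f m) y * if S (f m') y then 1 else 0) := by
        simp only [mul_sum, mul_ite, mul_one, mul_zero]
        exact sum_comm
    _ = ∑ y, (∑ x, P x * V x y) * ∑ x', P x' * if S x' y then 1 else 0 :=
        sum_congr rfl fun y _ =>
          sum_prod_pi_mul_apply_mul_apply hP1 hm (V · y) fun x' => if S x' y then 1 else 0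
    _ ≤ ∑ y, ∑ x', ε * (P x' * V x' y) := by
        refine sum_le_sum fun y _ => ?_
        rw [mul_sum]
        refine sum_le_sum fun x' _ => ?_
        split_ifs with hx'
        · nlinarith [hS x' y hx', hP0 x']
        · simp only [mul_zero]
          exact mul_nonneg hε (mul_nonneg (hP0 x') (hV0 x' y))
    _ = ε := by
        rw [sum_comm]
        simp only [← mul_sum, hV1, mul_one, hP1]

lemma sum_prod_pi_mul_thresholdDecoder_errors_le {M : ℕ} [NeZero M] (hP0 : ∀ x, 0 ≤ P x)
    (hP1 : ∑ x, P x = 1) (hV0 : ∀ x y, 0 ≤ V x y) (hV1 : ∀ x, ∑ y, V x y = 1) (hε : 0 ≤ ε)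
    (hS : ∀ x y, S x y → ∑ x', P x' * V x' y ≤ ε * V x y) :
    ∑ f : Fin M → A, (∏ i, P (f i)) *
        ∑ m, ∑ y, (if thresholdDecoder S f y ≠ m then V (f m) y else 0) ≤
      M * (∑ x, ∑ y, (if S x y then 0 else P x * V x y) + (M - 1) * ε) := by
  have hmiss : ∀ m : Fin M, ∑ f : Fin M → A, (∏ i, P (f i)) *
      ∑ y, (if S (f m) y then 0 else V (f m) y) = ∑ x, ∑ y, if S x y then 0 else P x * V x y := by
    intro m
    rw [sum_prod_pi_mul_apply hP1 m fun x => ∑ y, if S x y then 0 else V x y]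
    simp only [mul_sum, mul_ite, mul_zero]
  have hcard : ∀ m : Fin M, ((univ.erase m).card : ℝ) = M - 1 := fun m => by
    rw [card_erase_of_mem (mem_univ m), card_univ, Fintype.card_fin,
      Nat.cast_sub NeZero.one_le, Nat.cast_one]
  calc ∑ f : Fin M → A, (∏ i, P (f i)) *
        ∑ m, ∑ y, (if thresholdDecoder S f y ≠ m then V (f m) y else 0)
      ≤ ∑ f : Fin M → A, (∏ i, P (f i)) * ∑ m, ((∑ y, if S (f m) y then 0 else V (f m) y) +
          ∑ m' ∈ univ.erase m, ∑ y, if S (f m') y then V (f m) y else 0) := by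
        refine sum_le_sum fun f _ => mul_le_mul_of_nonneg_left ?_ (prod_nonneg fun i _ => hP0 _)
        refine sum_le_sum fun m _ => ?_
        rw [sum_comm, ← sum_add_distrib]
        exact sum_le_sum fun y _ => ite_thresholdDecoder_ne_le S f y m (hV0 _ _)
    _ = ∑ m : Fin M, (∑ f : Fin M → A, (∏ i, P (f i)) * ∑ y, (if S (f m) y then 0 else V (f m) y)) +
          ∑ m ∈ (univ : Finset (Fin M)), ∑ m' ∈ univ.erase m, ∑ f : Fin M → A,
            (∏ i, P (f i)) * ∑ y, if S (f m') y then V (f m) y else 0 := by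
        simp only [mul_sum, mul_add, sum_add_distrib]
        rw [sum_comm]
        congr 1
        rw [sum_comm]
        exact sum_congr rfl fun m _ => sum_comm
    _ ≤ ∑ m : Fin M, (∑ x, ∑ y, if S x y then 0 else P x * V x y) +
          ∑ m ∈ (univ : Finset (Fin M)), ∑ m' ∈ univ.erase m, ε := by
        simp only [hmiss]
        gcongr with m _ m' hm'
        exact sum_prod_pi_mul_sum_ite_le hP0 hP1 hV0 hV1 hε hS (ne_of_mem_erase hm').symm
    _ = M * (∑ x, ∑ y, (if S x y then 0 else P x * V x y) + (M - 1) * ε) := by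
        simp only [sum_const, hcard, card_univ, Fintype.card_fin, nsmul_eq_mul]
        ring

theorem exists_avgError_le {M : ℕ} [NeZero M] (hP0 : ∀ x, 0 ≤ P x) (hP1 : ∑ x, P x = 1)
    (hV0 : ∀ x y, 0 ≤ V x y) (hV1 : ∀ x, ∑ y, V x y = 1) (hε : 0 ≤ ε)
    (hS : ∀ x y, S x y → ∑ x', P x' * V x' y ≤ ε * V x y) :
    ∃ (f : Fin M → A) (φ : B → Fin M),
      avgError V f φ ≤ ∑ x, ∑ y, (if S x y then 0 else P x * V x y) + (M - 1) * ε := by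
  have hM : (0 : ℝ) < M := by exact_mod_cast NeZero.pos M
  have hmean : ∑ f : Fin M → A, (∏ i, P (f i)) * avgError V f (thresholdDecoder S f) ≤
      ∑ x, ∑ y, (if S x y then 0 else P x * V x y) + (M - 1) * ε :=
    calc ∑ f : Fin M → A, (∏ i, P (f i)) * avgError V f (thresholdDecoder S f)
        = 1 / M * ∑ f : Fin M → A, (∏ i, P (f i)) *
            ∑ m, ∑ y, (if thresholdDecoder S f y ≠ m then V (f m) y else 0) := by
          simp only [avgError, mul_sum, mul_left_comm]
      _ ≤ 1 / M * (M * (∑ x, ∑ y, (if S x y then 0 else P x * V x y) + (M - 1) * ε)) := by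
          gcongr
          exact sum_prod_pi_mul_thresholdDecoder_errors_le hP0 hP1 hV0 hV1 hε hS
      _ = _ := by field_simp
  obtain ⟨f, hf⟩ := exists_le_of_sum_mul_le (fun f => prod_nonneg fun i _ => hP0 (f i))
    (sum_prod_pi_eq_one hP1) hmean
  exact ⟨f, _, hf⟩

end RandomCoding

lemma le_exp_neg_mul_of_lt_one_div_mul_log {n : ℕ} {c w p : ℝ} (hc : 0 < c) (hw : 0 ≤ w)
    (hp : 0 ≤ p) (h : c < 1 / n * log (w / p)) : p ≤ exp (-(n * c)) * w := by
  have hn : (0 : ℝ) < n := Nat.cast_pos.2 <| Nat.pos_of_ne_zero fun hn0 => by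
    simp only [hn0, CharP.cast_eq_zero, div_zero, zero_mul] at h
    linarith
  have hlog : n * c < log (w / p) := by
    rw [one_div_mul_eq_div, lt_div_iff₀ hn] at h
    linarith
  have hwp : 0 < w / p := by
    by_contra hwp
    rw [le_antisymm (not_lt.1 hwp) (div_nonneg hw hp), log_zero] at hlog
    linarith [mul_pos hn hc]
  have hp' : 0 < p := lt_of_le_of_ne hp fun hp0 => by simp [← hp0] at hwp
  rw [lt_log_iff_exp_lt hwp, lt_div_iff₀ hp'] at hlog
  calc p = exp (-(n * c)) * (exp (n * c) * p) := by
        rw [← mul_assoc, ← exp_add, neg_add_cancel, exp_zero, one_mul]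
    _ ≤ exp (-(n * c)) * w := by gcongr

-- `sSup ∅ = 0` for sets of reals, whence the hypothesis `0 ≤ R`.
lemma exists_lt_of_nonneg_of_lt_sSup {s : Set ℝ} {R : ℝ} (hR : 0 ≤ R) (h : R < sSup s) :
    ∃ a ∈ s, R < a := by
  refine exists_lt_of_lt_csSup ?_ h
  by_contra hs
  rw [Set.not_nonempty_iff_eq_empty.1 hs, Real.sSup_empty] at h
  linarith

section GeneralChannel

variable {𝒳 𝒴 : Type*} [Fintype 𝒳] [Fintype 𝒴] {P : (n : ℕ) → (Fin n → 𝒳) → ℝ}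
  {W : (n : ℕ) → (Fin n → 𝒳) → (Fin n → 𝒴) → ℝ}

lemma exists_source_of_lt_capacity {R : ℝ} (hR : 0 ≤ R) (h : R < capacity W) :
    ∃ P : (n : ℕ) → (Fin n → 𝒳) → ℝ, (∀ n x, 0 ≤ P n x) ∧ (∀ n, ∑ x, P n x = 1) ∧
      ∃ β, R < β ∧ Tendsto (prInfDensityLT P W β) atTop (nhds 0) := by
  obtain ⟨_, ⟨P, hP0, hP1, rfl⟩, hRI⟩ := exists_lt_of_nonneg_of_lt_sSup hR h
  obtain ⟨β, hβ, hRβ⟩ := exists_lt_of_nonneg_of_lt_sSup hR hRI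
  exact ⟨P, hP0, hP1, β, hRβ, hβ⟩

lemma sum_ite_lt_le_prInfDensityLT (hP0 : ∀ n x, 0 ≤ P n x) (hW0 : ∀ n x y, 0 ≤ W n x y)
    {c β : ℝ} (hcβ : c < β) (n : ℕ) :
    ∑ x, ∑ y, (if c < 1 / (n : ℝ) * log (W n x y / ∑ x', P n x' * W n x' y) then 0
      else P n x * W n x y) ≤ prInfDensityLT P W β n := by
  refine sum_le_sum fun x _ => sum_le_sum fun y _ => ?_
  split_ifs with hc hβ hβ
  · exact mul_nonneg (hP0 n x) (hW0 n x y)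
  · exact le_rfl
  · exact le_rfl
  · exact absurd (lt_of_le_of_lt (not_lt.1 hc) hcβ) hβ

theorem exists_code_avgError_le_prInfDensityLT (hP0 : ∀ n x, 0 ≤ P n x)
    (hP1 : ∀ n, ∑ x, P n x = 1) (hW0 : ∀ n x y, 0 ≤ W n x y)
    (hW1 : ∀ n x, ∑ y, W n x y = 1) {c β : ℝ} (hc : 0 < c) (hcβ : c < β) (R : ℝ) (n : ℕ) :
    ∃ (f : Fin ⌈exp (n * R)⌉₊ → (Fin n → 𝒳)) (φ : (Fin n → 𝒴) → Fin ⌈exp (n * R)⌉₊),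
      avgError (W n) f φ ≤ prInfDensityLT P W β n + exp (-(n * (c - R))) := by
  have : NeZero ⌈exp (n * R)⌉₊ := ⟨(Nat.ceil_pos.2 (exp_pos _)).ne'⟩
  obtain ⟨f, φ, hfφ⟩ := exists_avgError_le (M := ⌈exp (n * R)⌉₊) (hP0 n) (hP1 n) (hW0 n)
    (hW1 n) (exp_pos _).le fun x y hxy => le_exp_neg_mul_of_lt_one_div_mul_log hc (hW0 n x y)
      (sum_nonneg fun x' _ => mul_nonneg (hP0 n x') (hW0 n x' y)) hxy
  refine ⟨f, φ, hfφ.trans (add_le_add (sum_ite_lt_le_prInfDensityLT hP0 hW0 hcβ n) ?_)⟩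
  calc ((⌈exp (n * R)⌉₊ : ℝ) - 1) * exp (-(n * c))
      ≤ exp (n * R) * exp (-(n * c)) := by
        gcongr
        linarith [Nat.ceil_lt_add_one (exp_pos (n * R)).le]
    _ = exp (-(n * (c - R))) := by rw [← exp_add]; ring_nf

end GeneralChannel

theorem channel_coding_direct_part_general
    {𝒳 𝒴 : Type*} [Fintype 𝒳] [Fintype 𝒴]
    (W : (n : ℕ) → (Fin n → 𝒳) → (Fin n → 𝒴) → ℝ)
    (hWnn : ∀ n x y, 0 ≤ W n x y) (hW1 : ∀ n x, ∑ y : Fin n → 𝒴, W n x y = 1)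
    (R : ℝ) (hR0 : 0 < R) (hRC : R < capacity W) :
    ∃ f : (n : ℕ) → Fin ⌈Real.exp ((n : ℝ) * R)⌉₊ → (Fin n → 𝒳),
    ∃ φ : (n : ℕ) → (Fin n → 𝒴) → Fin ⌈Real.exp ((n : ℝ) * R)⌉₊,
      Tendsto (fun n : ℕ =>
          (1 / (⌈Real.exp ((n : ℝ) * R)⌉₊ : ℝ)) *
            ∑ m : Fin ⌈Real.exp ((n : ℝ) * R)⌉₊, ∑ y : Fin n → 𝒴,
              (if φ n y ≠ m then W n (f n m) y else 0))
        atTop (nhds 0) := by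
  obtain ⟨P, hP0, hP1, β, hRβ, hβ⟩ := exists_source_of_lt_capacity hR0.le hRC
  obtain ⟨c, hRc, hcβ⟩ := exists_between hRβ
  choose f φ hfφ using
    exists_code_avgError_le_prInfDensityLT hP0 hP1 hWnn hW1 (hR0.trans hRc) hcβ R
  have hexp : Tendsto (fun n : ℕ => exp (-(n * (c - R)))) atTop (nhds 0) :=
    tendsto_exp_neg_atTop_nhds_zero.comp
      (tendsto_natCast_atTop_atTop.atTop_mul_const (sub_pos.2 hRc))
  refine ⟨f, φ, squeeze_zero (fun n => avgError_nonneg (hWnn n) _ _) hfφ ?_⟩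
  simpa using hβ.add hexp

theorem channel_coding_direct_part
    {𝒳 𝒴 : Type*} [Fintype 𝒳] [Fintype 𝒴] [Nonempty 𝒳] [Nonempty 𝒴]
    (W : (n : ℕ) → (Fin n → 𝒳) → (Fin n → 𝒴) → ℝ)
    (hWnn : ∀ n x y, 0 ≤ W n x y) (hW1 : ∀ n x, ∑ y : Fin n → 𝒴, W n x y = 1)
    (R : ℝ) (hR0 : 0 < R) (hRC : R < capacity W) :
    ∃ f : (n : ℕ) → Fin ⌈Real.exp ((n : ℝ) * R)⌉₊ → (Fin n → 𝒳),
    ∃ φ : (n : ℕ) → (Fin n → 𝒴) → Fin ⌈Real.exp ((n : ℝ) * R)⌉₊,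
      Tendsto (fun n : ℕ =>
          (1 / (⌈Real.exp ((n : ℝ) * R)⌉₊ : ℝ)) *
            ∑ m : Fin ⌈Real.exp ((n : ℝ) * R)⌉₊, ∑ y : Fin n → 𝒴,
              (if φ n y ≠ m then W n (f n m) y else 0))
        atTop (nhds 0) :=
  channel_coding_direct_part_general W hWnn hW1 R hR0 hRC
end
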